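/- Let M be a connected lattice path matroid, and let S_1 and S_2 be proper subsets of E(M) with S_1 ∩ S_2 = {x} and M = P_x(M|S_1, M|S_2). If x is in no 2-element circuit of M, then x is a terminal element of both restrictions M|S_1 and M|S_2. -/

import Mathlib

open Matroid Set

namespace Matroid

variable {α : Type*}

/-- Deletion of a set of elements from a matroid. -/
def del (M : Matroid α) (D : Set α) : Matroid α := M ↾ (M.E \ D)

/-- Contraction of a set of elements, defined via duality: `M ／ C = (M✶ ＼ C)✶`. -/
def con (M : Matroid α) (C : Set α) : Matroid α := (M✶.del C)✶

/-- `N` is a minor of `M` if `N` arises from `M` by a contraction followed by a deletion. -/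
def IsMinorOf (N M : Matroid α) : Prop :=
  ∃ C D : Set α, Disjoint C D ∧ N = (M.con C).del D

/-- A circuit is a minimal dependent set. -/
def IsCircuit' (M : Matroid α) (C : Set α) : Prop :=
  M.Dep C ∧ ∀ D, M.Dep D → D ⊆ C → D = C

/-- A spanning circuit is a circuit whose closure is the ground set. -/
def IsSpanningCircuit (M : Matroid α) (C : Set α) : Prop :=
  M.IsCircuit' C ∧ M.Spanning C

/-- Two elements of a matroid are connected if they are equal or lie on a common circuit. -/
def ConnTo (M : Matroid α) (x y : α) : Prop :=
  (x = y ∧ x ∈ M.E) ∨ ∃ C, M.IsCircuit' C ∧ x ∈ C ∧ y ∈ C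

/-- A matroid is connected if its ground set is nonempty and every two elements of the
ground set are connected. -/
def IsConnected (M : Matroid α) : Prop :=
  M.E.Nonempty ∧ ∀ ⦃x y : α⦄, x ∈ M.E → y ∈ M.E → M.ConnTo x y

/-- A loop: an element whose singleton is dependent. -/
def IsLoop' (M : Matroid α) (x : α) : Prop := x ∈ M.E ∧ ¬ M.Indep {x}

/-- The rank of a set `X` in a matroid: the maximum cardinality of an independent
subset of `X` (for finite matroids). -/
noncomputable def rkOf (M : Matroid α) (X : Set α) : ℕ :=
  sSup {k | ∃ I ⊆ X, M.Indep I ∧ I.ncard = k}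

/-- The nullity of a set `X`: `η(X) = |X| − r(X)`. -/
noncomputable def etaOf (M : Matroid α) (X : Set α) : ℕ := X.ncard - M.rkOf X

/-- A flat is connected if the corresponding restriction is a connected matroid. -/
def ConnectedFlat (M : Matroid α) (F : Set α) : Prop :=
  M.IsFlat F ∧ (M ↾ F).IsConnected

/-- A pnc-flat: a proper nontrivial (i.e. dependent) connected flat. -/
def PncFlat (M : Matroid α) (F : Set α) : Prop :=
  M.IsFlat F ∧ F ⊂ M.E ∧ M.Dep F ∧ (M ↾ F).IsConnected

/-- A fundamental flat: a pnc-flat `F` such that `F ∩ C` is a basis of `F`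
for some spanning circuit `C` of the matroid. -/
def FundFlat (M : Matroid α) (F : Set α) : Prop :=
  M.PncFlat F ∧ ∃ C, M.IsSpanningCircuit C ∧ M.IsBasis (F ∩ C) F

end Matroid

/-- `X` is a partial transversal of the family `J`. -/
def IsPartialTransversal {α : Type*} {r : ℕ} (J : Fin r → Set α) (X : Set α) : Prop :=
  ∃ f : α → Fin r, Set.InjOn f X ∧ ∀ x ∈ X, x ∈ J (f x)

/-- The family `J` is a presentation of the transversal matroid `M`: a set `X ⊆ E(M)` is
independent in `M` iff it is a partial transversal of `J`. -/
def IsPresentationOf {α : Type*} {r : ℕ} (J : Fin r → Set α) (M : Matroid α) : Prop :=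
  (∀ i, J i ⊆ M.E) ∧ ∀ X ⊆ M.E, (M.Indep X ↔ IsPartialTransversal J X)

/-- An interval presentation of `M` with respect to a path order: `e` enumerates the ground
set in the path order, and the presentation consists of the intervals `[a i, b i]`, where
the `a i` are strictly increasing, the `b i` are strictly increasing and `a i ≤ b i`. -/
structure IntervalPres {α : Type*} (M : Matroid α) (n r : ℕ) where
  e : Fin n → α
  inj : Function.Injective e
  ground : Set.range e = M.E
  a : Fin r → Fin n
  b : Fin r → Fin n
  ha : StrictMono a
  hb : StrictMono b
  hab : ∀ i, a i ≤ b i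
  pres : IsPresentationOf (fun i => e '' Set.Icc (a i) (b i)) M

/-- The `i`-th interval of an interval presentation. -/
def IntervalPres.J {α : Type*} {M : Matroid α} {n r : ℕ}
    (P : IntervalPres M n r) (i : Fin r) : Set α :=
  P.e '' Set.Icc (P.a i) (P.b i)

/-- A lattice path matroid: a matroid admitting an interval presentation. -/
def IsLPM {α : Type*} (M : Matroid α) : Prop :=
  ∃ n r : ℕ, Nonempty (IntervalPres M n r)

/-- A terminal element: one that is least or greatest in some path order. -/
def IsTerminal {α : Type*} (M : Matroid α) (x : α) : Prop :=
  ∃ (n r : ℕ) (P : IntervalPres M n r) (i : Fin n),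
    P.e i = x ∧ (i.1 = 0 ∨ i.1 = n - 1)

/-- A nested matroid: a lattice path matroid with an interval presentation in which the set
of lower endpoints, or the set of upper endpoints, is an interval in the path order. -/
def IsNested {α : Type*} (M : Matroid α) : Prop :=
  ∃ (n r : ℕ) (P : IntervalPres M n r),
    (Set.range P.a).OrdConnected ∨ (Set.range P.b).OrdConnected

/-- `M` is (isomorphic to) the uniform matroid `U_{r,k}`: `k` elements, and the independent
sets are exactly the subsets of the ground set with at most `r` elements. -/
def IsUniformOf {α : Type*} (M : Matroid α) (r k : ℕ) : Prop :=
  M.E.Finite ∧ M.E.ncard = k ∧ ∀ I ⊆ M.E, (M.Indep I ↔ I.ncard ≤ r)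

/-- `M` is (isomorphic to) an `n`-element circuit `U_{n-1,n}`. -/
def IsCircuitMatroidOf {α : Type*} (M : Matroid α) (n : ℕ) : Prop :=
  IsUniformOf M (n - 1) n

/-- `N` is the truncation of `M` to rank `k`. -/
def IsTruncationOf {α : Type*} (N M : Matroid α) (k : ℕ) : Prop :=
  N.E = M.E ∧ ∀ I, N.Indep I ↔ (M.Indep I ∧ I.ncard ≤ k)

/-- `N` is the direct sum of `M₁` and `M₂`. -/
def IsDirectSumOf {α : Type*} (N M₁ M₂ : Matroid α) : Prop :=
  Disjoint M₁.E M₂.E ∧ N.E = M₁.E ∪ M₂.E ∧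
    ∀ I, N.Indep I ↔ (I ⊆ N.E ∧ M₁.Indep (I ∩ M₁.E) ∧ M₂.Indep (I ∩ M₂.E))

/-- `N` is the parallel connection `P_x(M₁, M₂)`, described by its bases. -/
def IsParallelConnOf {α : Type*} (N M₁ M₂ : Matroid α) (x : α) : Prop :=
  M₁.E ∩ M₂.E = {x} ∧ ¬ (M₁.IsLoop' x ∧ M₂.IsLoop' x) ∧ N.E = M₁.E ∪ M₂.E ∧
    ∀ B, N.IsBase B ↔
      ((x ∈ B ∧ M₁.IsBase (B ∩ M₁.E) ∧ M₂.IsBase (B ∩ M₂.E)) ∨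
       (x ∉ B ∧ ((M₁.IsBase (B ∩ M₁.E) ∧ M₂.IsBase ((B ∩ M₂.E) ∪ {x})) ∨
                 (M₂.IsBase (B ∩ M₂.E) ∧ M₁.IsBase ((B ∩ M₁.E) ∪ {x})))))

/-- `N` is the free extension `M + x` of `M` by the element `x`. -/
def IsFreeExtOf {α : Type*} (N M : Matroid α) (x : α) : Prop :=
  x ∉ M.E ∧ N.E = insert x M.E ∧
    ∀ I, N.Indep I ↔ (I ⊆ N.E ∧ ((x ∉ I ∧ M.Indep I) ∨
        (x ∈ I ∧ M.Indep (I \ {x}) ∧ ¬ M.Spanning (I \ {x}))))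

/-- `M` is (isomorphic to) `P_m`, the truncation to rank `m` of the direct sum of two
`m`-element circuits. -/
def IsPMat {α : Type*} (M : Matroid α) (m : ℕ) : Prop :=
  ∃ U₁ U₂ S : Matroid α, IsCircuitMatroidOf U₁ m ∧ IsCircuitMatroidOf U₂ m ∧
    IsDirectSumOf S U₁ U₂ ∧ IsTruncationOf M S m

/-- `M` is (isomorphic to) `P'_n`, the truncation to rank `n` of the parallel connection,
at a common element, of two `n`-element circuits. -/
def IsP'Mat {α : Type*} (M : Matroid α) (n : ℕ) : Prop :=
  ∃ (U₁ U₂ S : Matroid α) (x : α), IsCircuitMatroidOf U₁ n ∧ IsCircuitMatroidOf U₂ n ∧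
    IsParallelConnOf S U₁ U₂ x ∧ IsTruncationOf M S n

/-- `M` is (isomorphic to) `A_n = P'_n + x`. -/
def IsAMat {α : Type*} (M : Matroid α) (n : ℕ) : Prop :=
  ∃ (N : Matroid α) (x : α), IsP'Mat N n ∧ IsFreeExtOf M N x

/-- `M` is (isomorphic to) `B_{n,k} = T_n(U_{n-1,n} ⊕ U_{n-1,n} ⊕ U_{k-1,k})`. -/
def IsBMat {α : Type*} (M : Matroid α) (n k : ℕ) : Prop :=
  ∃ U₁ U₂ U₃ S₁ S₂ : Matroid α, IsCircuitMatroidOf U₁ n ∧ IsCircuitMatroidOf U₂ n ∧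
    IsUniformOf U₃ (k - 1) k ∧ IsDirectSumOf S₁ U₁ U₂ ∧ IsDirectSumOf S₂ S₁ U₃ ∧
    IsTruncationOf M S₂ n

/-- `M` is (isomorphic to) `C_{n+k,k}`, the dual of `B_{n,k}`. -/
def IsCMat {α : Type*} (M : Matroid α) (n k : ℕ) : Prop := IsBMat M✶ n k

/-- `M` is (isomorphic to) `D_n = (P_{n-1} ⊕ U_{1,1}) + x`. -/
def IsDMat {α : Type*} (M : Matroid α) (n : ℕ) : Prop :=
  ∃ (P U S : Matroid α) (x : α), IsPMat P (n - 1) ∧ IsUniformOf U 1 1 ∧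
    IsDirectSumOf S P U ∧ IsFreeExtOf M S x

/-- `M` is (isomorphic to) `E_n`, the dual of `D_n`. -/
def IsEMat {α : Type*} (M : Matroid α) (n : ℕ) : Prop := IsDMat M✶ n

/-- `M` is (isomorphic to) the rank-3 wheel `W_3`, the cycle matroid of `K₄`: six elements,
rank 3, whose dependent 3-sets are the four triangles of `K₄`. -/
def IsWheel3 {α : Type*} (M : Matroid α) : Prop :=
  ∃ a b c d e f : α, ({a, b, c, d, e, f} : Set α).ncard = 6 ∧
    M.E = {a, b, c, d, e, f} ∧
    ∀ X ⊆ M.E, (M.Indep X ↔ X.ncard ≤ 3 ∧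
      X ≠ {a, b, f} ∧ X ≠ {a, c, e} ∧ X ≠ {b, c, d} ∧ X ≠ {d, e, f})

/-- `M` is (isomorphic to) the rank-3 whirl `W^3`, obtained from `W_3` by relaxing a
circuit-hyperplane: six elements, rank 3, with exactly three dependent 3-sets. -/
def IsWhirl3 {α : Type*} (M : Matroid α) : Prop :=
  ∃ a b c d e f : α, ({a, b, c, d, e, f} : Set α).ncard = 6 ∧
    M.E = {a, b, c, d, e, f} ∧
    ∀ X ⊆ M.E, (M.Indep X ↔ X.ncard ≤ 3 ∧
      X ≠ {a, b, f} ∧ X ≠ {a, c, e} ∧ X ≠ {b, c, d})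

/-- `M` is (isomorphic to) `R_4`: the parallel extension, at `x`, of the rank-4 matroid on
six elements whose ground set is the union of two 4-element circuits `{x,y,p,q}` and
`{x,y,u,v}` meeting in the independent set `{x,y}`, these circuits being its only
nonspanning circuits. -/
def IsR4Mat {α : Type*} (M : Matroid α) : Prop :=
  ∃ (S U : Matroid α) (x x' y p q u v : α),
    ({x, x', y, p, q, u, v} : Set α).ncard = 7 ∧
    S.E = {x, y, p, q, u, v} ∧
    (∀ X ⊆ S.E, (S.Indep X ↔ X.ncard ≤ 4 ∧
        ¬ ({x, y, p, q} : Set α) ⊆ X ∧ ¬ ({x, y, u, v} : Set α) ⊆ X)) ∧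
    U.E = {x, x'} ∧ (∀ B, U.IsBase B ↔ (B = {x} ∨ B = {x'})) ∧
    IsParallelConnOf M S U x

/-- `M` is (isomorphic to) `R_3`, the dual of `R_4`. -/
def IsR3Mat {α : Type*} (M : Matroid α) : Prop := IsR4Mat M✶

/-- `M` is isomorphic to a matroid in the list `E` of excluded minors of `L`. -/
def InExcludedList {α : Type*} (M : Matroid α) : Prop :=
  (∃ n, 3 ≤ n ∧ IsAMat M n) ∨
  (∃ n k, 2 ≤ k ∧ k ≤ n ∧ (IsBMat M n k ∨ IsCMat M n k)) ∨
  (∃ n, 4 ≤ n ∧ (IsDMat M n ∨ IsEMat M n)) ∨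
  IsWheel3 M ∨ IsWhirl3 M ∨ IsR3Mat M ∨ IsR4Mat M

/-- `M` is an excluded minor of the class `L` of lattice path matroids. -/
def IsExcludedMinorOfLPM {α : Type*} (M : Matroid α) : Prop :=
  M.Finite ∧ ¬ IsLPM M ∧ ∀ N : Matroid α, N.IsMinorOf M → N ≠ M → IsLPM N

/-!
A circuit `C` of a lattice path matroid spans every element `e` lying, in the path order,
between two elements of `C`: every interval of the presentation containing `e` meets `C` (or `C`
would split into two matchable halves), while by Hall's theorem `C` meets fewer intervals than it
has elements, so `e` together with all but one element of `C` cannot be matched.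

Since `M` is connected so is `M ↾ S₁`, hence any two elements of `S₁` lie on a circuit inside
`S₁`. An element `q ≠ x` of `S₂` is not spanned by `S₁`: extending `{x}` to a basis of `S₁` and
`{x, q}` (independent, as `x` is in no 2-element circuit) to a basis of `S₂` gives a basis of the
parallel connection. So `S₁`, and likewise `S₂`, is convex in the path order; as they cover the
ground set and meet only in `x`, one is the initial segment ending at `x` and the other the final
segment starting at `x`. Cutting the intervals of the presentation off at `x`, so that their upper
ends stay strictly increasing, presents the restriction to the initial segment with `x` last;
reversing the path order treats the final segment.
-/

namespace Matroid

variable {α : Type*} {M : Matroid α} {C : Set α} {e f : α}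

lemma isCircuit'_iff : M.IsCircuit' C ↔ M.IsCircuit C :=
  isCircuit_iff.symm

lemma IsConnected.isNonloop (hM : M.IsConnected) (he : e ∈ M.E) (hf : f ∈ M.E) (hef : e ≠ f) :
    M.IsNonloop e := by
  rcases hM.2 he hf with ⟨rfl, -⟩ | ⟨C, hC, heC, hfC⟩
  · exact absurd rfl hef
  by_contra hloop
  have hCe : {e} = C := (isCircuit'_iff.1 hC).eq_of_dep_subset
    ((not_isNonloop_iff he).1 hloop).dep (singleton_subset_iff.2 heC)
  exact hef (hCe ▸ hfC : f ∈ ({e} : Set α)).symm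

lemma IsCircuit.indep_inter (hC : M.IsCircuit C) {S : Set α} (hCS : ¬ C ⊆ S) :
    M.Indep (C ∩ S) :=
  hC.ssubset_indep (inter_subset_left.ssubset_of_ne fun he ↦ hCS (he ▸ inter_subset_right))

lemma IsNonloop.indep_pair_of_not_isCircuit (he : M.IsNonloop e) (hf : M.IsNonloop f) (hef : e ≠ f)
    (h : ¬ M.IsCircuit {e, f}) : M.Indep {e, f} := by
  by_contra hd
  exact h ((he.closure_eq_closure_iff_isCircuit_of_ne hef).1
    ((he.closure_eq_closure_iff_eq_or_dep hf).2 (Or.inr hd)))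

end Matroid

namespace IsParallelConnOf

variable {α : Type*} {M : Matroid α} {S T B₁ B₂ I C : Set α} {x y : α}

protected lemma symm {N M₁ M₂ : Matroid α} (h : IsParallelConnOf N M₁ M₂ x) :
    IsParallelConnOf N M₂ M₁ x := by
  obtain ⟨h₁, h₂, h₃, h₄⟩ := h
  refine ⟨by rwa [inter_comm], fun h ↦ h₂ h.symm, by rwa [union_comm], fun B ↦ ?_⟩
  rw [h₄ B]
  tauto

lemma inter_eq (h : IsParallelConnOf M (M ↾ S) (M ↾ T) x) : S ∩ T = {x} := h.1

lemma ground_eq (h : IsParallelConnOf M (M ↾ S) (M ↾ T) x) : M.E = S ∪ T := h.2.2.1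

lemma mem_left (h : IsParallelConnOf M (M ↾ S) (M ↾ T) x) : x ∈ S :=
  (h.inter_eq.symm ▸ rfl : x ∈ S ∩ T).1

lemma eq_of_mem_of_mem (h : IsParallelConnOf M (M ↾ S) (M ↾ T) x) (hyS : y ∈ S)
    (hyT : y ∈ T) : y = x := by
  have hy : y ∈ S ∩ T := ⟨hyS, hyT⟩
  rwa [h.inter_eq] at hy

lemma left_subset_ground (h : IsParallelConnOf M (M ↾ S) (M ↾ T) x) : S ⊆ M.E :=
  h.ground_eq ▸ subset_union_left

lemma isBase_union (h : IsParallelConnOf M (M ↾ S) (M ↾ T) x) (hB₁ : (M ↾ S).IsBase B₁)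
    (hB₂ : (M ↾ T).IsBase B₂) (hx₁ : x ∈ B₁) (hx₂ : x ∈ B₂) : M.IsBase (B₁ ∪ B₂) := by
  have hB₁S : B₁ ⊆ S := hB₁.subset_ground
  have hB₂T : B₂ ⊆ T := hB₂.subset_ground
  refine (h.2.2.2 _).2 (Or.inl ⟨Or.inl hx₁, ?_, ?_⟩) <;>
    rw [restrict_ground_eq, union_inter_distrib_right]
  · rwa [inter_eq_left.2 hB₁S, union_eq_left.2 fun y hy ↦
      h.eq_of_mem_of_mem hy.2 (hB₂T hy.1) ▸ hx₁]
  · rwa [inter_eq_left.2 hB₂T, union_eq_right.2 fun y hy ↦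
      h.eq_of_mem_of_mem (hB₁S hy.1) hy.2 ▸ hx₂]

lemma isBase_union_sdiff (h : IsParallelConnOf M (M ↾ S) (M ↾ T) x)
    (hB₁ : (M ↾ S).IsBase B₁) (hB₂ : (M ↾ T).IsBase B₂) (hx₁ : x ∉ B₁) (hx₂ : x ∈ B₂) :
    M.IsBase (B₁ ∪ (B₂ \ {x})) := by
  have hB₁S : B₁ ⊆ S := hB₁.subset_ground
  have hB₂T : B₂ ⊆ T := hB₂.subset_ground
  have hB₁T : B₁ ∩ T = ∅ := eq_empty_of_forall_notMem fun y hy ↦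
    hx₁ (h.eq_of_mem_of_mem (hB₁S hy.1) hy.2 ▸ hy.1)
  refine (h.2.2.2 _).2 (Or.inr ⟨fun hx ↦ hx.elim hx₁ fun hx ↦ hx.2 rfl, Or.inl ⟨?_, ?_⟩⟩) <;>
    rw [restrict_ground_eq, union_inter_distrib_right]
  · rwa [inter_eq_left.2 hB₁S, union_eq_left.2 fun y hy ↦
      absurd (h.eq_of_mem_of_mem hy.2 (hB₂T hy.1.1)) hy.1.2]
  · rwa [hB₁T, empty_union, inter_eq_left.2 (sdiff_subset.trans hB₂T), sdiff_union_self,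
      union_eq_left.2 (singleton_subset_iff.2 hx₂)]

lemma indep_union (h : IsParallelConnOf M (M ↾ S) (M ↾ T) x) {I₁ I₂ : Set α}
    (hI₁ : M.Indep I₁) (hI₁S : I₁ ⊆ S) (hx₁ : x ∈ I₁)
    (hI₂ : M.Indep I₂) (hI₂T : I₂ ⊆ T) (hx₂ : x ∈ I₂) : M.Indep (I₁ ∪ I₂) := by
  obtain ⟨B₁, hB₁, hIB₁⟩ := (restrict_indep_iff.2 ⟨hI₁, hI₁S⟩).exists_isBase_superset
  obtain ⟨B₂, hB₂, hIB₂⟩ := (restrict_indep_iff.2 ⟨hI₂, hI₂T⟩).exists_isBase_superset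
  exact (h.isBase_union hB₁ hB₂ (hIB₁ hx₁) (hIB₂ hx₂)).indep.subset (union_subset_union hIB₁ hIB₂)

lemma indep_of_indep_inter (h : IsParallelConnOf M (M ↾ S) (M ↾ T) x) (hIE : I ⊆ M.E)
    (hxI : x ∉ I) (hIS : M.Indep (I ∩ S)) (hIT : M.Indep (insert x (I ∩ T))) : M.Indep I := by
  obtain ⟨B₁, hB₁, hIB₁⟩ := (restrict_indep_iff.2 ⟨hIS, inter_subset_right⟩).exists_isBase_superset
  obtain ⟨B₂, hB₂, hIB₂⟩ := (restrict_indep_iff.2 ⟨hIT, insert_subset h.symm.mem_left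
    inter_subset_right⟩).exists_isBase_superset
  have hx₂ : x ∈ B₂ := hIB₂ (mem_insert x _)
  have hIB : ∀ y ∈ I, (y ∈ S → y ∈ B₁) ∧ (y ∈ T → y ∈ B₂) :=
    fun y hy ↦ ⟨fun hyS ↦ hIB₁ ⟨hy, hyS⟩, fun hyT ↦ hIB₂ (Or.inr ⟨hy, hyT⟩)⟩
  by_cases hx₁ : x ∈ B₁
  · refine (h.isBase_union hB₁ hB₂ hx₁ hx₂).indep.subset fun y hy ↦ ?_
    rcases h.ground_eq ▸ hIE hy with hyS | hyT
    exacts [Or.inl ((hIB y hy).1 hyS), Or.inr ((hIB y hy).2 hyT)]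
  · refine (h.isBase_union_sdiff hB₁ hB₂ hx₁ hx₂).indep.subset fun y hy ↦ ?_
    rcases h.ground_eq ▸ hIE hy with hyS | hyT
    exacts [Or.inl ((hIB y hy).1 hyS), Or.inr ⟨(hIB y hy).2 hyT, fun hyx ↦ hxI (hyx ▸ hy)⟩]

lemma indep_insert_inter (h : IsParallelConnOf M (M ↾ S) (M ↾ T) x) (hI : M.Indep I) :
    M.Indep (insert x (I ∩ S)) ∨ M.Indep (insert x (I ∩ T)) := by
  obtain ⟨B, hB, hIB⟩ := hI.exists_isBase_superset
  have hsub : ∀ R, insert x (I ∩ R) ⊆ B ∩ R ∪ {x} := by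
    rintro R y (rfl | ⟨hyI, hyR⟩)
    exacts [Or.inr rfl, Or.inl ⟨hIB hyI, hyR⟩]
  rcases (h.2.2.2 B).1 hB with ⟨hxB, hBS, -⟩ | ⟨-, ⟨-, hBT⟩ | ⟨-, hBS⟩⟩
  · left
    refine (restrict_indep_iff.1 (hBS.indep.subset ?_)).1
    rw [restrict_ground_eq, ← insert_eq_of_mem (show x ∈ B ∩ S from ⟨hxB, h.mem_left⟩)]
    simpa [union_comm] using hsub S
  · exact Or.inr (restrict_indep_iff.1 (hBT.indep.subset (hsub T))).1
  · exact Or.inl (restrict_indep_iff.1 (hBS.indep.subset (hsub S))).1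

lemma notMem_of_isCircuit (h : IsParallelConnOf M (M ↾ S) (M ↾ T) x) (hC : M.IsCircuit C)
    (hCS : ¬ C ⊆ S) (hCT : ¬ C ⊆ T) : x ∉ C := by
  intro hxC
  have hCST : C ∩ S ∪ C ∩ T = C := by
    rw [← inter_union_distrib_left, ← h.ground_eq, inter_eq_left.2 hC.subset_ground]
  apply hC.not_indep
  rw [← hCST]
  exact h.indep_union (hC.indep_inter hCS) inter_subset_right ⟨hxC, h.mem_left⟩
    (hC.indep_inter hCT) inter_subset_right ⟨hxC, h.symm.mem_left⟩

lemma isCircuit_insert_inter (h : IsParallelConnOf M (M ↾ S) (M ↾ T) x) (hC : M.IsCircuit C)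
    (hCS : ¬ C ⊆ S) (hCT : ¬ C ⊆ T) : M.IsCircuit (insert x (C ∩ S)) := by
  have hxC := h.notMem_of_isCircuit hC hCS hCT
  have hTdep : ¬ M.Indep (insert x (C ∩ T)) := fun hi ↦
    hC.not_indep (h.indep_of_indep_inter hC.subset_ground hxC (hC.indep_inter hCS) hi)
  have hSdep : ¬ M.Indep (insert x (C ∩ S)) := fun hi ↦
    hC.not_indep (h.symm.indep_of_indep_inter hC.subset_ground hxC (hC.indep_inter hCT) hi)
  refine isCircuit_iff_dep_forall_sdiff_singleton_indep.2 ⟨⟨hSdep, insert_subset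
    (h.left_subset_ground h.mem_left) (inter_subset_left.trans hC.subset_ground)⟩, ?_⟩
  rintro y (rfl | ⟨hyC, hyS⟩)
  · rw [insert_sdiff_self_of_notMem fun hx ↦ hxC hx.1]
    exact hC.indep_inter hCS
  have hyx : y ≠ x := fun hyx ↦ hxC (hyx ▸ hyC)
  have hyT : y ∉ T := fun hyT ↦ hyx (h.eq_of_mem_of_mem hyS hyT)
  rcases h.indep_insert_inter (hC.sdiff_singleton_indep hyC) with hi | hi
  · rwa [insert_sdiff_of_notMem _ (show x ∉ ({y} : Set α) from hyx.symm), inter_sdiff_right_comm]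
  · rw [← inter_sdiff_right_comm, sdiff_singleton_eq_self fun hy ↦ hyT hy.2] at hi
    exact absurd hi hTdep

lemma isConnected_restrict (h : IsParallelConnOf M (M ↾ S) (M ↾ T) x) (hM : M.IsConnected) :
    (M ↾ S).IsConnected := by
  have hSE := h.left_subset_ground
  refine ⟨⟨x, h.mem_left⟩, fun y z (hy : y ∈ S) (hz : z ∈ S) ↦ ?_⟩
  obtain rfl | hyz := eq_or_ne y z
  · exact Or.inl ⟨rfl, hy⟩
  obtain ⟨rfl, -⟩ | ⟨C, hC, hyC, hzC⟩ := hM.2 (hSE hy) (hSE hz)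
  · exact absurd rfl hyz
  rw [isCircuit'_iff] at hC
  refine Or.inr ?_
  simp_rw [isCircuit'_iff, restrict_isCircuit_iff hSE]
  by_cases hCS : C ⊆ S
  · exact ⟨C, ⟨hC, hCS⟩, hyC, hzC⟩
  have hCT : ¬ C ⊆ T := fun hCT ↦
    hyz ((h.eq_of_mem_of_mem hy (hCT hyC)).trans (h.eq_of_mem_of_mem hz (hCT hzC)).symm)
  exact ⟨_, ⟨h.isCircuit_insert_inter hC hCS hCT, insert_subset h.mem_left inter_subset_right⟩,
    Or.inr ⟨hyC, hy⟩, Or.inr ⟨hzC, hz⟩⟩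

lemma notMem_closure (h : IsParallelConnOf M (M ↾ S) (M ↾ T) x) {q : α} (hqT : q ∈ T)
    (hqS : q ∉ S) (hxq : M.Indep {x, q}) : q ∉ M.closure S := by
  obtain ⟨B₁, hB₁, hxB₁⟩ := (restrict_indep_iff.2 ⟨hxq.subset (singleton_subset_iff.2
    (mem_insert x _)), singleton_subset_iff.2 h.mem_left⟩).exists_isBase_superset
  obtain ⟨B₂, hB₂, hxqB₂⟩ := (restrict_indep_iff.2 ⟨hxq, pair_subset h.symm.mem_left hqT⟩
    ).exists_isBase_superset
  have hB : M.IsBase (B₁ ∪ B₂) := h.isBase_union hB₁ hB₂ (hxB₁ rfl) (hxqB₂ (mem_insert x _))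
  have hB₁S : M.IsBasis B₁ S := (isBase_restrict_iff h.left_subset_ground).1 hB₁
  rw [← hB₁S.closure_eq_closure, hB₁S.indep.notMem_closure_iff (hB.subset_ground
    (Or.inr (hxqB₂ (mem_insert_of_mem x rfl))))]
  exact ⟨hB.indep.subset (insert_subset (Or.inr (hxqB₂ (mem_insert_of_mem x rfl)))
    subset_union_left), fun hq ↦ hqS (hB₁S.subset hq)⟩

end IsParallelConnOf

section Transversal

variable {α : Type*} {r : ℕ} {J : Fin r → Set α} {M : Matroid α} {X Y C : Set α}

def familyNbhd (J : Fin r → Set α) (X : Set α) : Set (Fin r) := {i | (J i ∩ X).Nonempty}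

lemma isPartialTransversal_range [NeZero r] {ι : Type*} {v : ι → α} (hv : Function.Injective v)
    {g : ι → Fin r} (hg : Function.Injective g) (hgJ : ∀ k, v k ∈ J (g k)) :
    IsPartialTransversal J (range v) := by
  refine ⟨Function.extend v g fun _ ↦ 0, ?_, ?_⟩
  · rintro _ ⟨k, rfl⟩ _ ⟨l, rfl⟩ hkl
    rw [hv.extend_apply, hv.extend_apply] at hkl
    rw [hg hkl]
  · rintro _ ⟨k, rfl⟩
    rw [hv.extend_apply]
    exact hgJ k

namespace IsPartialTransversal

lemma of_subset_comp {r' : ℕ} {J' : Fin r' → Set α} {σ : Fin r' → Fin r}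
    (hσ : Function.Injective σ) (hJ : ∀ i, J' i ⊆ J (σ i)) (hX : IsPartialTransversal J' X) :
    IsPartialTransversal J X :=
  let ⟨f, hf, hfJ⟩ := hX
  ⟨σ ∘ f, hσ.comp_injOn hf, fun y hy ↦ hJ _ (hfJ y hy)⟩

lemma finite (hX : IsPartialTransversal J X) : X.Finite :=
  let ⟨_, hf, _⟩ := hX
  Finite.of_finite_image (toFinite _) hf

lemma ncard_le {N : Set (Fin r)} (hX : IsPartialTransversal J X)
    (hN : ∀ y ∈ X, ∀ i, y ∈ J i → i ∈ N) : X.ncard ≤ N.ncard := by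
  obtain ⟨f, hf, hfJ⟩ := hX
  rw [← hf.ncard_image]
  exact ncard_le_ncard (by rintro _ ⟨y, hy, rfl⟩; exact hN y hy _ (hfJ y hy))

lemma ncard_le_familyNbhd (hX : IsPartialTransversal J X) :
    X.ncard ≤ (familyNbhd J X).ncard :=
  hX.ncard_le fun y hy _ hyi ↦ ⟨y, hyi, hy⟩

lemma union_of_lt (hX : IsPartialTransversal J X) (hY : IsPartialTransversal J Y)
    (hlt : ∀ y ∈ X, ∀ z ∈ Y, ∀ i j, y ∈ J i → z ∈ J j → i < j) :
    IsPartialTransversal J (X ∪ Y) := by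
  classical
  obtain ⟨f, hf, hfJ⟩ := hX
  obtain ⟨g, hg, hgJ⟩ := hY
  have hlt' : ∀ y ∈ X, ∀ z ∈ Y, z ∉ X → f y ≠ g z := fun y hy z hz _ ↦
    (hlt y hy z hz _ _ (hfJ y hy) (hgJ z hz)).ne
  refine ⟨fun y ↦ if y ∈ X then f y else g y, ?_, ?_⟩
  · rintro y hy z hz hyz
    by_cases hyX : y ∈ X <;> by_cases hzX : z ∈ X <;> simp only [hyX, hzX, if_true, if_false]
      at hyz
    · exact hf hyX hzX hyz
    · exact absurd hyz (hlt' y hyX z (hz.resolve_left hzX) hzX)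
    · exact absurd hyz.symm (hlt' z hzX y (hy.resolve_left hyX) hyX)
    · exact hg (hy.resolve_left hyX) (hz.resolve_left hzX) hyz
  · intro y hy
    by_cases hyX : y ∈ X
    · simpa [hyX] using hfJ y hyX
    · simpa [hyX] using hgJ y (hy.resolve_left hyX)

end IsPartialTransversal

lemma isPartialTransversal_comp_equiv_iff (σ : Fin r ≃ Fin r) :
    IsPartialTransversal (J ∘ σ) X ↔ IsPartialTransversal J X :=
  ⟨IsPartialTransversal.of_subset_comp σ.injective fun _ ↦ subset_rfl,
    IsPartialTransversal.of_subset_comp σ.symm.injective fun _ ↦ by simp⟩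

namespace IsPresentationOf

lemma indep_iff (hJ : IsPresentationOf J M) (hX : X ⊆ M.E) :
    M.Indep X ↔ IsPartialTransversal J X :=
  hJ.2 X hX

/-- By Hall's theorem, since every proper subset of the circuit `C` has a transversal, `C` must
itself violate Hall's condition. -/
lemma ncard_familyNbhd_lt (hJ : IsPresentationOf J M) (hC : M.IsCircuit C) :
    (familyNbhd J C).ncard < C.ncard := by
  classical
  by_contra! hle
  have hHall : ∀ A ⊆ C, A.ncard ≤ (familyNbhd J A).ncard := by
    intro A hAC
    obtain rfl | hAC := hAC.eq_or_ssubset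
    · exact hle
    · exact ((hJ.indep_iff (hAC.subset.trans hC.subset_ground)).1
        (hC.ssubset_indep hAC)).ncard_le_familyNbhd
  obtain ⟨f, hf, hfJ⟩ := (Fintype.all_card_le_filter_rel_iff_exists_injective
    (fun (c : C) i ↦ (c : α) ∈ J i)).1 fun A ↦ by
      convert hHall (Subtype.val '' (A : Set C)) (by simp) using 1
      · rw [ncard_image_of_injective _ Subtype.val_injective, ncard_coe_finset]
      · rw [← ncard_coe_finset]
        congr 1
        ext i
        simp only [familyNbhd, Set.Nonempty]
        aesop
  obtain ⟨c₀, hc₀⟩ := hC.nonempty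
  have : NeZero r := ⟨fun hr ↦ (hr ▸ f ⟨c₀, hc₀⟩ : Fin 0).elim0⟩
  apply hC.not_indep
  rw [hJ.indep_iff hC.subset_ground, ← Subtype.range_coe (s := C)]
  exact isPartialTransversal_range Subtype.val_injective hf hfJ

lemma mem_closure_of_isCircuit (hJ : IsPresentationOf J M) (hC : M.IsCircuit C) {q w : α}
    (hq : q ∈ M.E) (hqC : ∀ i, q ∈ J i → (J i ∩ C).Nonempty) (hw : w ∈ C) :
    q ∈ M.closure (C \ {w}) := by
  by_cases hqC' : q ∈ C
  · exact hC.subset_closure_sdiff_singleton w hqC'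
  -- Otherwise `insert q (C \ {w})`, which has `C.ncard` elements, would be matched into the
  -- fewer than `C.ncard` members of `J` meeting `C`.
  have hCw := hC.sdiff_singleton_indep hw
  rw [hCw.mem_closure_iff]
  refine Or.inl ⟨fun hind ↦ ?_, insert_subset hq (sdiff_subset.trans hC.subset_ground)⟩
  have hcard : (insert q (C \ {w})).ncard = C.ncard := by
    have hCfin : C.Finite := ((hJ.indep_iff (sdiff_subset.trans hC.subset_ground)).1
      hCw).finite.insert w |>.subset (by simp)
    rw [ncard_insert_of_notMem (fun h ↦ hqC' h.1) (hCfin.sdiff), ncard_sdiff_singleton_add_one hw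
      hCfin]
  have := ((hJ.indep_iff hind.subset_ground).1 hind).ncard_le (N := familyNbhd J C) (by
    rintro y (rfl | ⟨hyC, -⟩) i hyi
    exacts [hqC i hyi, ⟨y, hyi, hyC⟩])
  exact (hJ.ncard_familyNbhd_lt hC).not_ge (hcard ▸ this)

end IsPresentationOf

end Transversal

lemma StrictMono.apply_add_sub_le {m : ℕ} {φ : Fin m → ℕ} (hφ : StrictMono φ) {i j : Fin m}
    (hij : i ≤ j) : φ i + (j - i : ℕ) ≤ φ j := by
  obtain ⟨i, hi⟩ := i
  obtain ⟨j, hj⟩ := j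
  simp only [Fin.mk_le_mk] at hij ⊢
  induction j, hij using Nat.le_induction with
  | base => simp
  | succ k hik ih =>
    have hk := hφ (show (⟨k, by omega⟩ : Fin m) < ⟨k + 1, hj⟩ from Fin.mk_lt_mk.2 k.lt_succ_self)
    have := ih (by omega)
    omega

/-- The sorted enumeration of the matched indices works: its `κ`-th term is at most the index
matched to some earlier term and at least the one matched to some later term. -/
lemma exists_strictMono_of_injective {β : Type*} [LinearOrder β] {m r : ℕ} {a c : Fin r → β}
    (ha : Monotone a) (hc : Monotone c) {x : Fin m → β} (hx : Monotone x) {g : Fin m → Fin r}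
    (hg : Function.Injective g) (hgx : ∀ κ, a (g κ) ≤ x κ ∧ x κ ≤ c (g κ)) :
    ∃ φ : Fin m → Fin r, StrictMono φ ∧ ∀ κ, a (φ κ) ≤ x κ ∧ x κ ≤ c (φ κ) := by
  classical
  set s := ((Finset.univ : Finset (Fin m)).image g).orderEmbOfFin
    (by rw [Finset.card_image_of_injective _ hg, Finset.card_univ, Fintype.card_fin])
  have hgs : ∀ κ, ∃ μ, s μ = g κ := fun κ ↦
    show g κ ∈ range s by simp [s, Finset.range_orderEmbOfFin]
  have hbelow : ∀ κ, ∃ κ' ≤ κ, s κ ≤ g κ' := by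
    intro κ
    by_contra! h
    have hsub : (Finset.Iic κ).image g ⊆ (Finset.Iio κ).image s := by
      intro i hi
      obtain ⟨κ', hκ', rfl⟩ := Finset.mem_image.1 hi
      obtain ⟨μ, hμ⟩ := hgs κ'
      exact Finset.mem_image.2 ⟨μ, Finset.mem_Iio.2 (s.lt_iff_lt.1
        (hμ ▸ h κ' (Finset.mem_Iic.1 hκ'))), hμ⟩
    have := Finset.card_le_card hsub
    rw [Finset.card_image_of_injective _ hg, Finset.card_image_of_injective _ s.injective,
      Fin.card_Iic, Fin.card_Iio] at this
    omega
  have habove : ∀ κ, ∃ κ' ≥ κ, g κ' ≤ s κ := by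
    intro κ
    by_contra! h
    have hsub : (Finset.Ici κ).image g ⊆ (Finset.Ioi κ).image s := by
      intro i hi
      obtain ⟨κ', hκ', rfl⟩ := Finset.mem_image.1 hi
      obtain ⟨μ, hμ⟩ := hgs κ'
      exact Finset.mem_image.2 ⟨μ, Finset.mem_Ioi.2 (s.lt_iff_lt.1
        (hμ ▸ h κ' (Finset.mem_Ici.1 hκ'))), hμ⟩
    have := Finset.card_le_card hsub
    rw [Finset.card_image_of_injective _ hg, Finset.card_image_of_injective _ s.injective,
      Fin.card_Ici, Fin.card_Ioi] at this
    have := κ.isLt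
    omega
  refine ⟨s, s.strictMono, fun κ ↦ ⟨?_, ?_⟩⟩
  · obtain ⟨κ', hκ', hsg⟩ := hbelow κ
    exact (ha hsg).trans ((hgx κ').1.trans (hx hκ'))
  · obtain ⟨κ', hκ', hgs⟩ := habove κ
    exact (hx hκ').trans ((hgx κ').2.trans (hc hgs))

/-- Here `x κ + i₁ ≤ p + ψ κ` says that `x κ` lies in the interval `ψ κ` cut off at
`p - (i₁ - ψ κ)`. -/
lemma exists_strictMono_clipped {m r : ℕ} {a b : Fin r → ℕ} (ha : StrictMono a)
    (hb : Monotone b) {p : ℕ} {i₁ : Fin r} (hi₁ : ∀ i, a i ≤ p ↔ i ≤ i₁) {x : Fin m → ℕ}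
    (hx : StrictMono x) (hxp : ∀ κ, x κ ≤ p) {φ : Fin m → Fin r} (hφ : StrictMono φ)
    (hφx : ∀ κ, a (φ κ) ≤ x κ ∧ x κ ≤ b (φ κ)) :
    ∃ ψ : Fin m → Fin r, StrictMono ψ ∧
      ∀ κ, ψ κ ≤ i₁ ∧ a (ψ κ) ≤ x κ ∧ x κ ≤ b (ψ κ) ∧ x κ + i₁ ≤ p + ψ κ := by
  have hφi₁ : ∀ κ, (φ κ : ℕ) ≤ i₁ := fun κ ↦ (hi₁ _).1 ((hφx κ).1.trans (hxp κ))
  let ψ : Fin m → Fin r := fun κ ↦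
    ⟨max (φ κ : ℕ) ((i₁ : ℕ) + x κ - p), by have := hφi₁ κ; have := hxp κ; omega⟩
  have hψ : ∀ κ, (ψ κ : ℕ) = max (φ κ : ℕ) ((i₁ : ℕ) + x κ - p) := fun _ ↦ rfl
  refine ⟨ψ, fun κ κ' hκ ↦ ?_, fun κ ↦ ?_⟩
  · have := Fin.lt_def.1 (hφ hκ)
    have := hx hκ
    rw [Fin.lt_def, hψ, hψ]
    omega
  have hφψ : φ κ ≤ ψ κ := Fin.le_def.2 ((hψ κ).symm ▸ le_max_left _ _)
  have hψi₁ : ψ κ ≤ i₁ := Fin.le_def.2 (by have := hφi₁ κ; have := hxp κ; rw [hψ]; omega)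
  refine ⟨hψi₁, ?_, (hφx κ).2.trans (hb hφψ), by have := hxp κ; rw [hψ]; omega⟩
  by_cases hψφ : ψ κ = φ κ
  · exact hψφ ▸ (hφx κ).1
  have := ha.apply_add_sub_le hψi₁
  have := (hi₁ i₁).2 le_rfl
  have := hψ κ
  have := Fin.val_ne_of_ne hψφ
  omega

lemma eq_Iic_and_eq_Ici_of_ordConnected {ι : Type*} [LinearOrder ι] {A B : Set ι} {t a : ι}
    (hA : A.OrdConnected) (hB : B.OrdConnected) (hAB : A ∪ B = univ) (hAB' : A ∩ B = {t})
    (hA' : A ≠ univ) (ha : IsBot a) (haA : a ∈ A) : A = Iic t ∧ B = Ici t := by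
  have htAB : t ∈ A ∩ B := hAB'.symm ▸ rfl
  have heq : ∀ j ∈ A, j ∈ B → j = t := fun j hjA hjB ↦ by
    have hj : j ∈ A ∩ B := ⟨hjA, hjB⟩
    rwa [hAB'] at hj
  have hmem : ∀ j, j ∉ A → j ∈ B := fun j hj ↦ ((hAB ▸ mem_univ j : j ∈ A ∪ B)).resolve_left hj
  obtain ⟨k, hk⟩ := (ne_univ_iff_exists_notMem A).1 hA'
  have hIicA : Iic t ⊆ A := fun j hj ↦ hA.out haA htAB.1 ⟨ha j, hj⟩
  have htk : t < k := lt_of_not_ge fun hkt ↦ hk (hIicA hkt)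
  have hAIic : A ⊆ Iic t := by
    intro j hjA
    rw [mem_Iic]
    by_contra! htj
    rcases lt_or_ge j k with hjk | hkj
    · exact htj.ne' (heq j hjA (hB.out htAB.2 (hmem k hk) ⟨htj.le, hjk.le⟩))
    · exact hk (hA.out htAB.1 hjA ⟨htk.le, hkj⟩)
  refine ⟨hAIic.antisymm hIicA, Subset.antisymm (fun j hjB ↦ ?_) fun j htj ↦ ?_⟩
  · rw [mem_Ici]
    by_contra! hjt
    exact hjt.ne (heq j (hIicA hjt.le) hjB)
  · obtain rfl | htj := htj.eq_or_lt
    · exact htAB.2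
    · exact hmem j fun hjA ↦ htj.not_ge (hAIic hjA)

namespace IntervalPres

variable {α : Type*} {M : Matroid α} {n r : ℕ} (P : IntervalPres M n r) {C : Set α} {i : Fin r}
  {j : Fin n}

lemma isPresentationOf : IsPresentationOf P.J M := P.pres

lemma e_mem_J_iff : P.e j ∈ P.J i ↔ P.a i ≤ j ∧ j ≤ P.b i :=
  P.inj.mem_set_image

lemma e_mem_ground (j : Fin n) : P.e j ∈ M.E :=
  P.ground ▸ mem_range_self j

lemma exists_e_eq {y : α} (hy : y ∈ M.E) : ∃ j, P.e j = y := by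
  rwa [← P.ground] at hy

lemma lt_of_e_mem_J_of_lt_a {i' : Fin r} (hj : P.e j ∈ P.J i') (hji : j < P.a i) : i' < i :=
  P.ha.lt_iff_lt.1 (((P.e_mem_J_iff).1 hj).1.trans_lt hji)

lemma lt_of_e_mem_J_of_b_lt {i' : Fin r} (hj : P.e j ∈ P.J i') (hij : P.b i < j) : i < i' :=
  P.hb.lt_iff_lt.1 (hij.trans_le ((P.e_mem_J_iff).1 hj).2)

/-- If an interval of the presentation missed `C` although it contains a position between two
elements of `C`, then `C` would split into the parts before and after that interval, which are
matched to the intervals before and after it; so `C` would be independent. -/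
lemma J_inter_nonempty_of_isCircuit (hC : M.IsCircuit C) {l q h : Fin n} (hl : P.e l ∈ C)
    (hh : P.e h ∈ C) (hlq : l < q) (hqh : q < h) (hq : P.e q ∈ P.J i) :
    (P.J i ∩ C).Nonempty := by
  rw [e_mem_J_iff] at hq
  by_contra hCi
  set Clow := C ∩ P.e '' Iio (P.a i)
  set Chigh := C ∩ P.e '' Ioi (P.b i)
  have hsplit : C = Clow ∪ Chigh := by
    refine Subset.antisymm (fun y hy ↦ ?_) (union_subset inter_subset_left inter_subset_left)
    obtain ⟨j, rfl⟩ := P.exists_e_eq (hC.subset_ground hy)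
    rcases lt_or_ge j (P.a i) with hj | hj
    · exact Or.inl ⟨hy, j, hj, rfl⟩
    rcases lt_or_ge (P.b i) j with hj' | hj'
    · exact Or.inr ⟨hy, j, hj', rfl⟩
    exact absurd ⟨P.e j, (P.e_mem_J_iff).2 ⟨hj, hj'⟩, hy⟩ hCi
  have hlow : Clow ⊂ C := inter_subset_left.ssubset_of_ne fun he ↦ by
    rw [← he] at hh
    obtain ⟨-, j, hj, hjh⟩ := hh
    rw [P.inj hjh] at hj
    exact hj.not_ge (hq.1.trans hqh.le)
  have hhigh : Chigh ⊂ C := inter_subset_left.ssubset_of_ne fun he ↦ by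
    rw [← he] at hl
    obtain ⟨-, j, hj, hjl⟩ := hl
    rw [P.inj hjl] at hj
    exact hj.not_ge (hlq.le.trans hq.2)
  have transversal := fun (X : Set α) (hX : X ⊂ C) ↦
    (P.isPresentationOf.indep_iff (hX.subset.trans hC.subset_ground)).1 (hC.ssubset_indep hX)
  apply hC.not_indep
  rw [P.isPresentationOf.indep_iff hC.subset_ground, hsplit]
  refine (transversal _ hlow).union_of_lt (transversal _ hhigh) ?_
  rintro _ ⟨-, j, hj, rfl⟩ _ ⟨-, k, hk, rfl⟩ i₁ i₂ hji₁ hki₂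
  exact (P.lt_of_e_mem_J_of_lt_a hji₁ hj).trans (P.lt_of_e_mem_J_of_b_lt hki₂ hk)

lemma mem_closure_of_isCircuit (hC : M.IsCircuit C) {l q h : Fin n} (hl : P.e l ∈ C)
    (hh : P.e h ∈ C) (hlq : l < q) (hqh : q < h) {w : α} (hw : w ∈ C) :
    P.e q ∈ M.closure (C \ {w}) :=
  P.isPresentationOf.mem_closure_of_isCircuit hC (P.e_mem_ground q)
    (fun _ hq ↦ P.J_inter_nonempty_of_isCircuit hC hl hh hlq hqh hq) hw

def rev : IntervalPres M n r where
  e := P.e ∘ Fin.rev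
  inj := P.inj.comp Fin.rev_injective
  ground := by rw [range_comp, Fin.rev_surjective.range_eq, image_univ, P.ground]
  a i := (P.b i.rev).rev
  b i := (P.a i.rev).rev
  ha _ _ hij := Fin.rev_lt_rev.2 (P.hb (Fin.rev_lt_rev.2 hij))
  hb _ _ hij := Fin.rev_lt_rev.2 (P.ha (Fin.rev_lt_rev.2 hij))
  hab i := Fin.rev_le_rev.2 (P.hab i.rev)
  pres := by
    have hJ : (fun i ↦ (P.e ∘ Fin.rev) '' Icc (P.b i.rev).rev (P.a i.rev).rev) =
        P.J ∘ Fin.revPerm := by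
      ext i : 1
      rw [image_comp, Fin.image_rev, Fin.preimage_rev_Icc, Fin.rev_rev, Fin.rev_rev]
      rfl
    rw [hJ]
    exact ⟨fun i ↦ P.pres.1 _, fun X hX ↦
      (P.pres.2 X hX).trans (isPartialTransversal_comp_equiv_iff _).symm⟩

@[simp] lemma rev_e (j : Fin n) : P.rev.e j = P.e j.rev := rfl

lemma exists_strictMono_matching {X : Set α} (hX : M.Indep X) :
    ∃ (m : ℕ) (xs : Fin m → Fin n) (φ : Fin m → Fin r), StrictMono xs ∧ range (P.e ∘ xs) = X ∧
      StrictMono φ ∧ ∀ κ, P.a (φ κ) ≤ xs κ ∧ xs κ ≤ P.b (φ κ) := by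
  classical
  obtain ⟨f, hf, hfJ⟩ := (P.isPresentationOf.indep_iff hX.subset_ground).1 hX
  set xs := (Finset.univ.filter fun j ↦ P.e j ∈ X).orderEmbOfFin rfl
  have hxsX : range (P.e ∘ xs) = X := by
    rw [range_comp, Finset.range_orderEmbOfFin]
    ext y
    refine ⟨?_, fun hy ↦ ?_⟩
    · rintro ⟨j, hj, rfl⟩
      simpa using hj
    · obtain ⟨j, rfl⟩ := P.exists_e_eq (hX.subset_ground hy)
      exact ⟨j, by simpa using hy, rfl⟩
  have hxs : ∀ κ, P.e (xs κ) ∈ X := fun κ ↦ hxsX.subset (mem_range_self κ)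
  obtain ⟨φ, hφ, hφx⟩ := exists_strictMono_of_injective P.ha.monotone P.hb.monotone
    xs.monotone (g := fun κ ↦ f (P.e (xs κ)))
    (fun κ κ' h ↦ xs.injective (P.inj (hf (hxs κ) (hxs κ') h)))
    fun κ ↦ (P.e_mem_J_iff).1 (hfJ _ (hxs κ))
  exact ⟨_, xs, φ, xs.strictMono, hxsX, hφ, hφx⟩

variable {p : Fin n} {i₁ : Fin r}

lemma val_a_add_sub_le {i i' : Fin r} (h : i ≤ i') : (P.a i : ℕ) + (i' - i : ℕ) ≤ P.a i' :=
  (Fin.val_strictMono.comp P.ha).apply_add_sub_le h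

lemma le_of_forall_a_le_iff (hi₁ : ∀ i, P.a i ≤ p ↔ i ≤ i₁) : (i₁ : ℕ) ≤ p := by
  have h := P.val_a_add_sub_le (Fin.mk_le_of_le_val (Nat.zero_le i₁) : ⟨0, i₁.pos⟩ ≤ i₁)
  have := Fin.le_def.1 ((hi₁ i₁).2 le_rfl)
  simp only [Nat.sub_zero] at h
  omega

lemma exists_forall_a_le_iff (hp : M.IsNonloop (P.e p)) : ∃ i₁, ∀ i, P.a i ≤ p ↔ i ≤ i₁ := by
  classical
  obtain ⟨f, -, hf⟩ := (P.isPresentationOf.indep_iff (singleton_subset_iff.2 hp.mem_ground)).1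
    hp.indep
  set s := Finset.univ.filter fun i ↦ P.a i ≤ p
  have hne : s.Nonempty := ⟨f (P.e p), by simpa [s] using ((P.e_mem_J_iff).1 (hf _ rfl)).1⟩
  refine ⟨s.max' hne, fun i ↦ ⟨fun hi ↦ s.le_max' i (by simpa [s] using hi), fun hi ↦
    (P.ha.monotone hi).trans ?_⟩⟩
  simpa [s] using s.max'_mem hne

/-- The intervals starting at or before `p`, the `i`-th of them cut off at `p - (i₁ - i)`, present
the restriction of `M` to the initial segment `Iic p`. -/
lemma indep_iff_isPartialTransversal_clipped (hi₁ : ∀ i, P.a i ≤ p ↔ i ≤ i₁)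
    {J : Fin (i₁ + 1) → Set α} (hJ : ∀ i y, y ∈ J i ↔ ∃ j, P.e j = y ∧
      P.a (Fin.castLE i₁.isLt i) ≤ j ∧ j ≤ P.b (Fin.castLE i₁.isLt i) ∧ (j + i₁ : ℕ) ≤ p + i)
    {X : Set α} (hX : X ⊆ P.e '' Iic p) : M.Indep X ↔ IsPartialTransversal J X := by
  have hXE : X ⊆ M.E := hX.trans (image_subset_range _ _ |>.trans P.ground.subset)
  refine ⟨fun hXi ↦ ?_, fun hXJ ↦ (P.isPresentationOf.indep_iff hXE).2
    (hXJ.of_subset_comp (Fin.castLE_injective i₁.isLt) fun i y hy ↦ ?_)⟩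
  · obtain ⟨m, xs, φ, hxs, rfl, hφ, hφx⟩ := P.exists_strictMono_matching hXi
    have hxsp : ∀ κ, (xs κ : ℕ) ≤ p := fun κ ↦ by
      obtain ⟨j, hj, hje⟩ := hX (mem_range_self κ)
      exact P.inj hje ▸ hj
    obtain ⟨ψ, hψ, hψx⟩ := exists_strictMono_clipped (a := fun i ↦ (P.a i : ℕ))
      (b := fun i ↦ (P.b i : ℕ)) P.ha P.hb.monotone hi₁ hxs hxsp hφ hφx
    refine isPartialTransversal_range (P.inj.comp hxs.injective)
      (g := fun κ ↦ (ψ κ).castLT (Nat.lt_succ_of_le (hψx κ).1))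
      (fun κ κ' h ↦ hψ.injective (Fin.ext (by simpa using congrArg Fin.val h))) fun κ ↦ (hJ _ _).2
      ⟨xs κ, rfl, (hψx κ).2⟩
  · obtain ⟨j, rfl, hj⟩ := (hJ i y).1 hy
    exact (P.e_mem_J_iff).2 ⟨hj.1, hj.2.1⟩

def restrictIic (hi₁ : ∀ i, P.a i ≤ p ↔ i ≤ i₁) :
    IntervalPres (M ↾ (P.e '' Iic p)) (p + 1) (i₁ + 1) where
  e j := P.e (Fin.castLE p.isLt j)
  inj := P.inj.comp (Fin.castLE_injective _)
  ground := by
    rw [restrict_ground_eq, range_comp', Fin.range_castLE]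
    congr 1
    ext j
    simp only [mem_ofPred_eq, mem_Iic, Fin.le_def]
    omega
  a i := ⟨P.a (Fin.castLE i₁.isLt i),
    Nat.lt_succ_of_le ((hi₁ _).2 (Fin.le_def.2 (Nat.lt_succ_iff.1 i.isLt)))⟩
  b i := ⟨min (P.b (Fin.castLE i₁.isLt i)) (p + i - i₁), by omega⟩
  ha _ _ h := P.ha (Fin.strictMono_castLE _ h)
  hb i i' h := by
    have := Fin.lt_def.1 (P.hb (Fin.strictMono_castLE i₁.isLt h))
    have := Fin.lt_def.1 h
    have := P.le_of_forall_a_le_iff hi₁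
    simp only [Fin.lt_def] at *
    omega
  hab i := by
    have := Fin.le_def.1 (P.hab (Fin.castLE i₁.isLt i))
    have := P.val_a_add_sub_le (Fin.le_def.2 (Nat.lt_succ_iff.1 i.isLt) : Fin.castLE i₁.isLt i ≤ i₁)
    have := Fin.le_def.1 ((hi₁ i₁).2 le_rfl)
    simp only [Fin.le_def, Fin.val_castLE] at *
    omega
  pres := by
    refine ⟨fun i ↦ ?_, fun X hX ↦ ?_⟩
    · rintro _ ⟨j, -, rfl⟩
      exact ⟨Fin.castLE p.isLt j, Fin.le_def.2 (Nat.lt_succ_iff.1 j.isLt), rfl⟩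
    replace hX : X ⊆ P.e '' Iic p := hX
    rw [restrict_indep_iff, and_iff_left hX]
    refine P.indep_iff_isPartialTransversal_clipped hi₁ (fun i y ↦ ⟨?_, ?_⟩) hX
    · rintro ⟨j, ⟨h₁, h₂⟩, rfl⟩
      refine ⟨_, rfl, h₁, ?_⟩
      have := Fin.le_def.1 h₂
      have := P.le_of_forall_a_le_iff hi₁
      simp only [Fin.le_def, Fin.val_castLE] at *
      omega
    · rintro ⟨j, rfl, h₁, h₂, h₃⟩
      have := Fin.le_def.1 h₂
      have := i.isLt
      refine ⟨j.castLT (by omega), ⟨h₁, Fin.le_def.2 ?_⟩, rfl⟩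
      simp only [Fin.val_castLT]
      omega

lemma isTerminal_restrict_image_Iic (hp : M.IsNonloop (P.e p)) :
    IsTerminal (M ↾ (P.e '' Iic p)) (P.e p) :=
  let ⟨_, hi₁⟩ := P.exists_forall_a_le_iff hp
  ⟨_, _, P.restrictIic hi₁, Fin.last p, rfl, Or.inr rfl⟩

variable {S T : Set α} {x : α}

/-- An element strictly between two elements of `S` would be spanned by a circuit inside `S`,
which `IsParallelConnOf.notMem_closure` forbids. -/
lemma ordConnected_preimage_of_isParallelConnOf (h : IsParallelConnOf M (M ↾ S) (M ↾ T) x)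
    (hM : M.IsConnected) (hx : ∀ q ∈ T, q ≠ x → M.Indep {x, q}) :
    (P.e ⁻¹' S).OrdConnected := by
  refine ordConnected_iff.2 fun l (hl : P.e l ∈ S) k (hk : P.e k ∈ S) _ q ⟨hlq, hqk⟩ ↦ ?_
  by_contra hq
  replace hlq : l < q := hlq.lt_of_ne fun hlq ↦ hq (hlq ▸ hl)
  replace hqk : q < k := hqk.lt_of_ne fun hqk ↦ hq (hqk ▸ hk)
  obtain ⟨hlk, -⟩ | ⟨C, hC, hlC, hkC⟩ := (h.isConnected_restrict hM).2 hl hk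
  · exact (hlq.trans hqk).ne (P.inj hlk)
  rw [isCircuit'_iff, restrict_isCircuit_iff h.left_subset_ground] at hC
  have hqT : P.e q ∈ T := (h.ground_eq ▸ P.e_mem_ground q).resolve_left hq
  have hqx : P.e q ≠ x := fun hqx ↦ hq (show P.e q ∈ S from hqx ▸ h.mem_left)
  refine h.notMem_closure hqT hq (hx _ hqT hqx) ?_
  exact M.closure_subset_closure (sdiff_subset.trans hC.2)
    (P.mem_closure_of_isCircuit hC.1 hlC hkC hlq hqk hlC)

lemma isTerminal_restrict_image_Ici {p : Fin n} (hp : M.IsNonloop (P.e p)) :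
    IsTerminal (M ↾ (P.e '' Ici p)) (P.e p) := by
  have h := P.rev.isTerminal_restrict_image_Iic (p := p.rev) (by simpa using hp)
  rwa [rev_e, Fin.rev_rev, show P.rev.e = P.e ∘ Fin.rev from rfl, image_comp, Fin.image_rev,
    Fin.preimage_rev_Iic, Fin.rev_rev] at h

lemma isTerminal_of_isParallelConnOf (h : IsParallelConnOf M (M ↾ S) (M ↾ T) x)
    (hM : M.IsConnected) (hS : S ≠ M.E) (hx : M.IsNonloop x)
    (hxq : ∀ q ∈ M.E, q ≠ x → M.Indep {x, q}) {j₀ : Fin n} (hj₀ : IsBot j₀) (h₀ : P.e j₀ ∈ S) :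
    IsTerminal (M ↾ S) x ∧ IsTerminal (M ↾ T) x := by
  obtain ⟨t, rfl⟩ := P.exists_e_eq (h.left_subset_ground h.mem_left)
  have hcover : P.e ⁻¹' S ∪ P.e ⁻¹' T = univ := by
    rw [← preimage_union, ← h.ground_eq, ← P.ground, preimage_range]
  have hinter : P.e ⁻¹' S ∩ P.e ⁻¹' T = {t} := by
    rw [← preimage_inter, h.inter_eq]
    ext j
    simp [P.inj.eq_iff]
  have hS' : P.e ⁻¹' S ≠ univ := fun hS' ↦ hS <| h.left_subset_ground.antisymm fun y hy ↦ by
    obtain ⟨j, rfl⟩ := P.exists_e_eq hy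
    show j ∈ P.e ⁻¹' S
    rw [hS']
    trivial
  obtain ⟨hSt, hTt⟩ := eq_Iic_and_eq_Ici_of_ordConnected
    (P.ordConnected_preimage_of_isParallelConnOf h hM fun q hq ↦
      hxq q (h.symm.left_subset_ground hq))
    (P.ordConnected_preimage_of_isParallelConnOf h.symm hM fun q hq ↦
      hxq q (h.left_subset_ground hq)) hcover hinter hS' hj₀ h₀
  have himage : ∀ R ⊆ M.E, P.e '' (P.e ⁻¹' R) = R := fun R hR ↦
    image_preimage_eq_of_subset (P.ground ▸ hR)
  rw [← himage S h.left_subset_ground, ← himage T h.symm.left_subset_ground, hSt, hTt]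
  exact ⟨P.isTerminal_restrict_image_Iic hx, P.isTerminal_restrict_image_Ici hx⟩

end IntervalPres

section Statements

variable {α : Type*}

theorem terminal_of_parallel_connection_decomposition_general
    (M : Matroid α) (hM : IsLPM M) (hc : M.IsConnected)
    (S₁ S₂ : Set α) (x : α) (h₁ : S₁ ⊂ M.E) (h₂ : S₂ ⊂ M.E)
    (hpc : IsParallelConnOf M (M ↾ S₁) (M ↾ S₂) x)
    (h2c : ¬ ∃ C, M.IsCircuit' C ∧ x ∈ C ∧ C.ncard = 2) :
    IsTerminal (M ↾ S₁) x ∧ IsTerminal (M ↾ S₂) x := by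
  obtain ⟨n, r, ⟨P⟩⟩ := hM
  have hxE : x ∈ M.E := hpc.left_subset_ground hpc.mem_left
  obtain ⟨w, hwE, hwS₁⟩ := exists_of_ssubset h₁
  have hx : M.IsNonloop x := hc.isNonloop hxE hwE fun hxw ↦ hwS₁ (hxw ▸ hpc.mem_left)
  have hxq : ∀ q ∈ M.E, q ≠ x → M.Indep {x, q} := fun q hq hqx ↦
    hx.indep_pair_of_not_isCircuit (hc.isNonloop hq hxE hqx) hqx.symm fun hC ↦
      h2c ⟨_, isCircuit'_iff.2 hC, mem_insert x _, ncard_pair hqx.symm⟩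
  have hn : 0 < n := (P.exists_e_eq hxE).choose.pos
  have hj₀ : IsBot (⟨0, hn⟩ : Fin n) := fun j ↦ Fin.mk_le_of_le_val (Nat.zero_le j)
  rcases hpc.ground_eq ▸ P.e_mem_ground ⟨0, hn⟩ with h₀ | h₀
  · exact P.isTerminal_of_isParallelConnOf hpc hc h₁.ne hx hxq hj₀ h₀
  · exact (P.isTerminal_of_isParallelConnOf hpc.symm hc h₂.ne hx hxq hj₀ h₀).symm

theorem terminal_of_parallel_connection_decomposition
    (M : Matroid α) (hM : IsLPM M) (hc : M.IsConnected)
    (S₁ S₂ : Set α) (x : α) (h₁ : S₁ ⊂ M.E) (h₂ : S₂ ⊂ M.E)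
    (hx : S₁ ∩ S₂ = {x})
    (hpc : IsParallelConnOf M (M ↾ S₁) (M ↾ S₂) x)
    (h2c : ¬ ∃ C, M.IsCircuit' C ∧ x ∈ C ∧ C.ncard = 2) :
    IsTerminal (M ↾ S₁) x ∧ IsTerminal (M ↾ S₂) x :=
  terminal_of_parallel_connection_decomposition_general M hM hc S₁ S₂ x h₁ h₂ hpc h2c
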